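/- arXiv:2310.17759 — 5 statements merged into one kernel-verified Lean document; each statement's English description precedes it below -/
import Mathlib

section
/- Let E be a real Hilbert space, f : E → ℝ be ℓ-smooth and μ-strongly convex with 0 < μ ≤ ℓ, and let g : E → E satisfy ‖g(x) − ∇f(x)‖ ≤ δ for all x ∈ E, where δ ≥ 0. Then for all x, y ∈ E: (μ/4)‖x − y‖² ≤ f(y) − ( f(x) − δ²/μ + ⟪g(x), y − x⟫ ) ≤ ℓ‖x − y‖² + (1/(2ℓ) + 1/μ)·δ². -/
/-!
Write `y - x = v`. Strong convexity of `f` bounds `f y - f x - ⟪∇f x, v⟫` below by `μ/2 ‖v‖²`, and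
`ℓ`-Lipschitz continuity of `∇f` (integrated along the segment from `x` to `y`) bounds it above
by `ℓ/2 ‖v‖²`. Replacing `∇f x` by `g x` costs at most `δ‖v‖`, and this error is absorbed by
Young's inequality, `δ‖v‖ ≤ μ/4 ‖v‖² + δ²/μ` on one side and `δ‖v‖ ≤ ℓ/2 ‖v‖² + δ²/(2ℓ)` on the
other.
-/

open RealInnerProductSpace Set

lemma ConvexOn.add_fderiv_sub_le {E : Type*} [NormedAddCommGroup E] [NormedSpace ℝ E]
    {s : Set E} {h : E → ℝ} {h' : E →L[ℝ] ℝ} {x y : E} (hconv : ConvexOn ℝ s h)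
    (hx : x ∈ s) (hy : y ∈ s) (hh : HasFDerivAt h h' x) :
    h x + h' (y - x) ≤ h y := by
  set γ : ℝ →ᵃ[ℝ] E := AffineMap.lineMap x y
  have hderiv : HasDerivAt (h ∘ γ) (h' (y - x)) 0 := by
    have hh0 : HasFDerivAt h h' (γ 0) := by simpa [γ] using hh
    exact hh0.comp_hasDerivAt 0 AffineMap.hasDerivAt_lineMap
  have hslope := (hconv.comp_affineMap γ).le_slope_of_hasDerivAt
    (by simpa [γ] using hx) (by simpa [γ] using hy) zero_lt_one hderiv
  simp only [slope_def_field, γ, Function.comp_apply, AffineMap.lineMap_apply_one,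
    AffineMap.lineMap_apply_zero, sub_zero, div_one] at hslope
  linarith

lemma le_add_add_half_of_deriv_sub_le {φ φ' : ℝ → ℝ} {L : ℝ}
    (hφ : ∀ t ∈ Icc (0 : ℝ) 1, HasDerivAt φ (φ' t) t)
    (hφ' : ∀ t ∈ Ioo (0 : ℝ) 1, φ' t - φ' 0 ≤ L * t) :
    φ 1 ≤ φ 0 + φ' 0 + L / 2 := by
  set ψ : ℝ → ℝ := fun t => φ t - φ' 0 * t - L / 2 * t ^ 2
  have hψ : ∀ t ∈ Icc (0 : ℝ) 1, HasDerivAt ψ (φ' t - φ' 0 - L * t) t := fun t ht => by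
    refine (((hφ t ht).sub ((hasDerivAt_id t).const_mul (φ' 0))).sub
      ((hasDerivAt_pow 2 t).const_mul (L / 2))).congr_deriv ?_
    ring
  have hanti : AntitoneOn ψ (Icc 0 1) := by
    refine antitoneOn_of_deriv_nonpos (convex_Icc 0 1)
      (fun t ht => (hψ t ht).continuousAt.continuousWithinAt) ?_ ?_ <;>
      rw [interior_Icc]
    · exact fun t ht => (hψ t (Ioo_subset_Icc_self ht)).differentiableAt.differentiableWithinAt
    · intro t ht
      rw [(hψ t (Ioo_subset_Icc_self ht)).deriv]
      linarith [hφ' t ht]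
  have hψ01 := hanti (left_mem_Icc.2 zero_le_one) (right_mem_Icc.2 zero_le_one) zero_le_one
  simp only [ψ] at hψ01
  linarith

lemma mul_le_div_four_mul_sq_add_sq_div {ε : ℝ} (hε : 0 < ε) (a b : ℝ) :
    a * b ≤ ε / 4 * a ^ 2 + b ^ 2 / ε := by
  have key : ε / 4 * a ^ 2 + b ^ 2 / ε - a * b = (ε * a / 2 - b) ^ 2 / ε := by
    field_simp; ring
  have hsq : 0 ≤ (ε * a / 2 - b) ^ 2 / ε := by positivity
  linarith

section InnerProductSpace

variable {E : Type*} [NormedAddCommGroup E] [InnerProductSpace ℝ E] [CompleteSpace E]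

lemma HasGradientAt.hasDerivAt_comp_add_smul {f : E → ℝ} {f' x v : E} {t : ℝ}
    (hf : HasGradientAt f f' (x + t • v)) :
    HasDerivAt (fun s : ℝ => f (x + s • v)) ⟪f', v⟫ t := by
  have hline : HasDerivAt (fun s : ℝ => x + s • v) v t :=
    ((hasDerivAt_id t).smul_const v).const_add x |>.congr_deriv (one_smul ℝ v)
  have hcomp := hf.hasFDerivAt.comp_hasDerivAt t hline
  rwa [InnerProductSpace.toDual_apply_apply] at hcomp

lemma le_add_inner_gradient_add_of_lipschitz_gradient {f : E → ℝ} {ℓ : ℝ}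
    (hf : Differentiable ℝ f) (hlip : ∀ a b : E, ‖gradient f a - gradient f b‖ ≤ ℓ * ‖a - b‖)
    (x y : E) :
    f y ≤ f x + ⟪gradient f x, y - x⟫ + ℓ / 2 * ‖y - x‖ ^ 2 := by
  set v := y - x
  have hderiv : ∀ t ∈ Icc (0 : ℝ) 1,
      HasDerivAt (fun s : ℝ => f (x + s • v)) ⟪gradient f (x + t • v), v⟫ t :=
    fun t _ => (hf _).hasGradientAt.hasDerivAt_comp_add_smul
  have hgrowth : ∀ t ∈ Ioo (0 : ℝ) 1,
      ⟪gradient f (x + t • v), v⟫ - ⟪gradient f (x + (0 : ℝ) • v), v⟫ ≤ ℓ * ‖v‖ ^ 2 * t := by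
    intro t ht
    calc ⟪gradient f (x + t • v), v⟫ - ⟪gradient f (x + (0 : ℝ) • v), v⟫
        = ⟪gradient f (x + t • v) - gradient f x, v⟫ := by simp [inner_sub_left]
      _ ≤ ‖gradient f (x + t • v) - gradient f x‖ * ‖v‖ := real_inner_le_norm _ _
      _ ≤ ℓ * ‖(x + t • v) - x‖ * ‖v‖ := by gcongr; exact hlip _ _
      _ = ℓ * ‖v‖ ^ 2 * t := by
        rw [add_sub_cancel_left, norm_smul, Real.norm_of_nonneg ht.1.le]; ring
  have hsegment := le_add_add_half_of_deriv_sub_le hderiv hgrowth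
  simp only [one_smul, zero_smul, add_zero, v, add_sub_cancel] at hsegment
  linarith

lemma StrongConvexOn.add_inner_add_sq_le_of_hasGradientAt {f : E → ℝ} {f' x y : E} {s : Set E}
    {m : ℝ} (hf : StrongConvexOn s m f) (hx : x ∈ s) (hy : y ∈ s) (hf' : HasGradientAt f f' x) :
    f x + ⟪f', y - x⟫ + m / 2 * ‖y - x‖ ^ 2 ≤ f y := by
  have hderiv := hf'.hasFDerivAt.sub ((hasStrictFDerivAt_norm_sq x).hasFDerivAt.const_mul (m / 2))
  have hfirst := (strongConvexOn_iff_convex.1 hf).add_fderiv_sub_le hx hy hderiv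
  have hnorm_sq : ‖y‖ ^ 2 = ‖x‖ ^ 2 + 2 * ⟪x, y - x⟫ + ‖y - x‖ ^ 2 := by
    rw [← norm_add_sq_real, add_sub_cancel]
  simp only [sub_apply, smul_apply, InnerProductSpace.toDual_apply_apply, coe_innerSL_apply,
    nsmul_eq_mul, Nat.cast_ofNat, smul_eq_mul, hnorm_sq] at hfirst
  linarith

end InnerProductSpace

theorem inexact_oracle_transformation_general
    {E : Type*} [NormedAddCommGroup E] [InnerProductSpace ℝ E] [CompleteSpace E]
    (f : E → ℝ) (ℓ μ δ : ℝ) (hμ : 0 < μ) (hμℓ : μ ≤ ℓ)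
    (hfdiff : Differentiable ℝ f)
    (hsmooth : ∀ a b : E, ‖gradient f a - gradient f b‖ ≤ ℓ * ‖a - b‖)
    (hsc : ConvexOn ℝ Set.univ (fun x => f x - μ / 2 * ‖x‖ ^ 2))
    (g : E → E) (hg : ∀ x : E, ‖g x - gradient f x‖ ≤ δ)
    (x y : E) :
    μ / 4 * ‖x - y‖ ^ 2 ≤ f y - (f x - δ ^ 2 / μ + ⟪g x, y - x⟫) ∧
    f y - (f x - δ ^ 2 / μ + ⟪g x, y - x⟫) ≤ ℓ * ‖x - y‖ ^ 2 + (1 / (2 * ℓ) + 1 / μ) * δ ^ 2 := by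
  have hℓ : 0 < ℓ := hμ.trans_le hμℓ
  have hupper := le_add_inner_gradient_add_of_lipschitz_gradient hfdiff hsmooth x y
  have hlower := (strongConvexOn_iff_convex.2 hsc).add_inner_add_sq_le_of_hasGradientAt
    (mem_univ x) (mem_univ y) (hfdiff x).hasGradientAt
  have hsplit : ⟪g x, y - x⟫ = ⟪gradient f x, y - x⟫ + ⟪g x - gradient f x, y - x⟫ := by
    rw [inner_sub_left]; ring
  have herror : |⟪g x - gradient f x, y - x⟫| ≤ δ * ‖y - x‖ :=
    (abs_real_inner_le_norm _ _).trans (mul_le_mul_of_nonneg_right (hg x) (norm_nonneg _))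
  have hyoung_μ := mul_le_div_four_mul_sq_add_sq_div hμ ‖y - x‖ δ
  have hyoung_ℓ := mul_le_div_four_mul_sq_add_sq_div (mul_pos two_pos hℓ) ‖y - x‖ δ
  have hconst : (1 / (2 * ℓ) + 1 / μ) * δ ^ 2 = δ ^ 2 / (2 * ℓ) + δ ^ 2 / μ := by ring
  rw [norm_sub_rev x y, hsplit, hconst]
  constructor
  · linarith [(abs_le.1 herror).2]
  · linarith [(abs_le.1 herror).1]

/-- Lemma A.3, first part.
Let `E` be a real Hilbert space, `f : E → ℝ` be `ℓ`-smooth and `μ`-strongly convex with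
`0 < μ ≤ ℓ`, and let `g : E → E` satisfy `‖g x − ∇f x‖ ≤ δ` for all `x`, where `δ ≥ 0`.
Then for all `x, y`:
`(μ/4)‖x − y‖² ≤ f y − (f x − δ²/μ + ⟪g x, y − x⟫) ≤ ℓ‖x − y‖² + (1/(2ℓ) + 1/μ)·δ²`. -/
theorem inexact_oracle_transformation
    {E : Type*} [NormedAddCommGroup E] [InnerProductSpace ℝ E] [CompleteSpace E]
    (f : E → ℝ) (ℓ μ δ : ℝ) (hμ : 0 < μ) (hμℓ : μ ≤ ℓ) (hδ : 0 ≤ δ)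
    (hfdiff : Differentiable ℝ f)
    (hsmooth : ∀ a b : E, ‖gradient f a - gradient f b‖ ≤ ℓ * ‖a - b‖)
    (hsc : ConvexOn ℝ Set.univ (fun x => f x - μ / 2 * ‖x‖ ^ 2))
    (g : E → E) (hg : ∀ x : E, ‖g x - gradient f x‖ ≤ δ)
    (x y : E) :
    μ / 4 * ‖x - y‖ ^ 2 ≤ f y - (f x - δ ^ 2 / μ + ⟪g x, y - x⟫) ∧
    f y - (f x - δ ^ 2 / μ + ⟪g x, y - x⟫) ≤ ℓ * ‖x - y‖ ^ 2 + (1 / (2 * ℓ) + 1 / μ) * δ ^ 2 :=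
  inexact_oracle_transformation_general f ℓ μ δ hμ hμℓ hfdiff hsmooth hsc g hg x y
end

section
/- Let E be a real Hilbert space, X ⊆ E a nonempty closed convex set, f : E → ℝ an ℓ-smooth and μ-strongly convex function with 0 < μ ≤ ℓ, and x* ∈ X the minimizer of f over X. Let g : E → E satisfy ‖g(x) − ∇f(x)‖ ≤ δ for all x ∈ E, where δ ≥ 0. Define sequences (x_t), (y_t) by x₀ = y₀ ∈ X and, for t ≥ 0, x_{t+1} = Π_X(y_t − g(y_t)/(2ℓ)) and y_{t+1} = x_{t+1} + ((2 − √(μ/ℓ))/(2 + √(μ/ℓ)))·(x_{t+1} − x_t). Then for every T ≥ 0, f(x_T) − f(x*) ≤ exp(−(T/2)·√(μ/ℓ))·( f(x₀) − f(x*) + (μ/4)‖x₀ − x*‖² ) + √(ℓ/μ)·(1/ℓ + 2/μ)·δ². -/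
open RealInnerProductSpace

/-- `p` is the metric projection of `v` onto `S`. -/
def IsProjOn {H : Type*} [NormedAddCommGroup H] (S : Set H) (v p : H) : Prop :=
  p ∈ S ∧ ∀ w ∈ S, ‖v - p‖ ≤ ‖v - w‖

/-!
With `τ = √(μ/ℓ)/2`, the auxiliary sequence `z_t = x_t + ((1+τ)/τ)(y_t - x_t)` and the potential
`Φ_t = f(x_t) - f(x*) + (μ/4)‖z_t - x*‖²` satisfy `Φ_{t+1} ≤ (1-τ) Φ_t + (1/(2ℓ) + 1/μ) δ²`.
Indeed, by Cauchy–Schwarz and Young the oracle `g` still gives the two-sided model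
`f(y) + ⟪g(y), w - y⟫ + (μ/4)‖w - y‖² - δ²/μ ≤ f(w) ≤ f(y) + ⟪g(y), w - y⟫ + ℓ‖w - y‖² + δ²/(2ℓ)`,
i.e. exact bounds for curvature constants `2ℓ` and `μ/2`, up to additive errors. Against this
model the usual estimate for accelerated projected gradient goes through verbatim: the
variational inequality of the projection, tested at `(1-τ)x_t + τx*`, combined with the lower
model at `x_t` and `x*` leaves a quadratic form in the iterates that is nonpositive for the
chosen momentum. Unrolling the recursion and `1 - τ ≤ exp(-τ)` give the bound.
-/

open Set

theorem ConvexOn.add_le_of_hasFDerivAt {F : Type*} [NormedAddCommGroup F] [NormedSpace ℝ F]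
    {h : F → ℝ} {h' : F →L[ℝ] ℝ} {a : F} (hconv : ConvexOn ℝ univ h)
    (hh : HasFDerivAt h h' a) (b : F) : h a + h' (b - a) ≤ h b := by
  set φ : ℝ → ℝ := fun t => h (a + t • (b - a))
  have hφ : ConvexOn ℝ univ φ := by
    simpa [φ, Function.comp_def, AffineMap.lineMap_apply, add_comm]
      using hconv.comp_affineMap (AffineMap.lineMap a b)
  have hline : HasDerivAt (fun t : ℝ => a + t • (b - a)) (b - a) 0 := by
    simpa using ((hasDerivAt_id (0 : ℝ)).smul_const (b - a)).const_add a
  have hder : HasDerivAt φ (h' (b - a)) 0 := hh.comp_hasDerivAt_of_eq 0 hline (by simp)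
  have := hφ.deriv_le_slope (mem_univ 0) (mem_univ 1) one_pos hder.differentiableAt
  rw [hder.deriv, slope_def_field] at this
  simp only [φ, zero_smul, one_smul, add_zero, add_sub_cancel, sub_zero, div_one] at this
  linarith

theorem le_pow_mul_add_div_of_le_mul_add {Φ : ℕ → ℝ} {τ ε : ℝ} (hτ0 : 0 < τ) (hτ1 : τ ≤ 1)
    (hε : 0 ≤ ε) (hstep : ∀ t, Φ (t + 1) ≤ (1 - τ) * Φ t + ε) (T : ℕ) :
    Φ T ≤ (1 - τ) ^ T * Φ 0 + ε / τ := by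
  induction T with
  | zero =>
    rw [pow_zero, one_mul, le_add_iff_nonneg_right]
    positivity
  | succ n ih =>
    calc Φ (n + 1) ≤ (1 - τ) * ((1 - τ) ^ n * Φ 0 + ε / τ) + ε :=
          (hstep n).trans (by gcongr)
      _ = (1 - τ) ^ (n + 1) * Φ 0 + ε / τ := by field_simp; ring

section InnerProductSpace

variable {E : Type*} [NormedAddCommGroup E] [InnerProductSpace ℝ E]

theorem IsProjOn.inner_sub_le_zero {S : Set E} (hS : Convex ℝ S) {v p : E} (h : IsProjOn S v p)
    {w : E} (hw : w ∈ S) : ⟪v - p, w - p⟫ ≤ 0 := by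
  have : Nonempty S := ⟨⟨p, h.1⟩⟩
  refine (norm_eq_iInf_iff_real_inner_le_zero hS h.1).1 (le_antisymm ?_ ?_) w hw
  · exact le_ciInf fun w' => h.2 w' w'.2
  · refine ciInf_le ⟨0, ?_⟩ (⟨p, h.1⟩ : S)
    rintro _ ⟨w', rfl⟩
    exact norm_nonneg _

theorem inner_le_mul_norm_sq_add {e w : E} {δ c : ℝ} (he : ‖e‖ ≤ δ) (hc : 0 < c) :
    ⟪e, w⟫ ≤ c * ‖w‖ ^ 2 + δ ^ 2 / (4 * c) := by
  have hyoung : c * ‖w‖ ^ 2 + ‖e‖ ^ 2 / (4 * c) - ‖e‖ * ‖w‖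
      = (2 * c * ‖w‖ - ‖e‖) ^ 2 / (4 * c) := by
    field_simp
    ring
  have : ‖e‖ ^ 2 / (4 * c) ≤ δ ^ 2 / (4 * c) := by gcongr
  linarith [real_inner_le_norm e w, show 0 ≤ (2 * c * ‖w‖ - ‖e‖) ^ 2 / (4 * c) by positivity]

/-- The two points under the norms are `z_t` and `z_{t+1}` (the latter rewritten using the
momentum `(1-τ)/(1+τ)`); with exactly these, all cross terms cancel. -/
theorem agd_potential_identity (ℓ τ : ℝ) (hτ : τ ≠ 0) (a b c s : E) :
    2 * ℓ * ⟪b - c, c - ((1 - τ) • a + τ • s)⟫ + ℓ * ‖c - b‖ ^ 2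
      - τ * (ℓ * τ ^ 2 * ‖s - b‖ ^ 2) - (1 - τ) * (ℓ * τ ^ 2 * ‖a - b‖ ^ 2)
      + ℓ * τ ^ 2 * ‖c + ((1 - τ) / τ) • (c - a) - s‖ ^ 2
      - (1 - τ) * (ℓ * τ ^ 2 * ‖a + ((1 + τ) / τ) • (b - a) - s‖ ^ 2)
    = -(ℓ * τ * (1 - τ ^ 2) * ‖a - b‖ ^ 2) := by
  simp only [← real_inner_self_eq_norm_sq, inner_add_left, inner_add_right, inner_sub_left,
    inner_sub_right, real_inner_smul_left, real_inner_smul_right]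
  rw [real_inner_comm a b, real_inner_comm a c, real_inner_comm a s, real_inner_comm b c,
    real_inner_comm b s, real_inner_comm c s]
  field_simp
  ring

theorem agd_potential_step {X : Set E} (hX : Convex ℝ X) {f : E → ℝ} {ℓ μ τ ε₁ ε₂ : ℝ}
    {G a b c s : E} (hℓ : 0 < ℓ) (hτ0 : 0 < τ) (hτ1 : τ ≤ 1) (hμ : μ = 4 * ℓ * τ ^ 2)
    (haX : a ∈ X) (hsX : s ∈ X)
    (hup : f c ≤ f b + ⟪G, c - b⟫ + ℓ * ‖c - b‖ ^ 2 + ε₁)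
    (hlow : ∀ w, f b + ⟪G, w - b⟫ + μ / 4 * ‖w - b‖ ^ 2 - ε₂ ≤ f w)
    (hproj : IsProjOn X (b - (1 / (2 * ℓ)) • G) c) :
    f c - f s + μ / 4 * ‖c + ((1 - τ) / τ) • (c - a) - s‖ ^ 2
      ≤ (1 - τ) * (f a - f s + μ / 4 * ‖a + ((1 + τ) / τ) • (b - a) - s‖ ^ 2) + ε₁ + ε₂ := by
  subst hμ
  set u := (1 - τ) • a + τ • s
  have hvar : ⟪G, c - u⟫ ≤ 2 * ℓ * ⟪b - c, c - u⟫ := by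
    have huX : u ∈ X := hX haX hsX (sub_nonneg.2 hτ1) hτ0.le (sub_add_cancel 1 τ)
    have h := hproj.inner_sub_le_zero hX huX
    rw [sub_right_comm, inner_sub_left, real_inner_smul_left, ← neg_sub c u, inner_neg_right,
      inner_neg_right] at h
    rw [← mul_le_mul_iff_of_pos_left (by positivity : 0 < 1 / (2 * ℓ))]
    field_simp at h ⊢
    linarith
  have hsplit : ⟪G, c - b⟫ = ⟪G, c - u⟫ + τ * ⟪G, s - b⟫ + (1 - τ) * ⟪G, a - b⟫ := by
    rw [← real_inner_smul_right, ← real_inner_smul_right, ← inner_add_right, ← inner_add_right]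
    congr 1
    module
  have hs := mul_le_mul_of_nonneg_left (hlow s) hτ0.le
  have ha := mul_le_mul_of_nonneg_left (hlow a) (sub_nonneg.2 hτ1)
  have hid := agd_potential_identity ℓ τ hτ0.ne' a b c s
  have hslack : 0 ≤ ℓ * τ * (1 - τ ^ 2) * ‖a - b‖ ^ 2 := by
    have : 0 ≤ 1 - τ ^ 2 := by nlinarith
    positivity
  linarith

variable [CompleteSpace E]

theorem add_inner_gradient_add_sq_le {f : E → ℝ} {μ : ℝ}
    (hsc : ConvexOn ℝ univ (fun x => f x - μ / 2 * ‖x‖ ^ 2)) {a : E}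
    (hf : DifferentiableAt ℝ f a) (b : E) :
    f a + ⟪gradient f a, b - a⟫ + μ / 2 * ‖b - a‖ ^ 2 ≤ f b := by
  have hder := hf.hasGradientAt.hasFDerivAt.sub ((hasFDerivAt_id a).norm_sq.const_mul (μ / 2))
  have := hsc.add_le_of_hasFDerivAt hder b
  simp only [sub_apply, smul_apply, InnerProductSpace.toDual_apply_apply,
    ContinuousLinearMap.comp_apply, innerSL_apply_apply, ContinuousLinearMap.id_apply, id,
    smul_eq_mul, nsmul_eq_mul, inner_sub_right, real_inner_self_eq_norm_sq,
    Nat.cast_ofNat] at this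
  rw [norm_sub_sq_real, inner_sub_right, real_inner_comm a b]
  linarith

theorem le_add_inner_gradient_add_sq {f : E → ℝ} {ℓ : ℝ} (hf : Differentiable ℝ f)
    (hsmooth : ∀ a b : E, ‖gradient f a - gradient f b‖ ≤ ℓ * ‖a - b‖) (a b : E) :
    f b ≤ f a + ⟪gradient f a, b - a⟫ + ℓ / 2 * ‖b - a‖ ^ 2 := by
  set d := b - a
  set ψ : ℝ → ℝ := fun t => f (a + t • d) - t * ⟪gradient f a, d⟫ - ℓ / 2 * t ^ 2 * ‖d‖ ^ 2
  have hψ (t : ℝ) :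
      HasDerivAt ψ (⟪gradient f (a + t • d), d⟫ - ⟪gradient f a, d⟫ - ℓ * t * ‖d‖ ^ 2) t := by
    have hline : HasDerivAt (fun s : ℝ => a + s • d) d t := by
      simpa using ((hasDerivAt_id t).smul_const d).const_add a
    have hfline : HasDerivAt (fun s : ℝ => f (a + s • d)) ⟪gradient f (a + t • d), d⟫ t :=
      (hf _).hasGradientAt.hasFDerivAt.comp_hasDerivAt t hline
    have hlin : HasDerivAt (fun s : ℝ => s * ⟪gradient f a, d⟫) ⟪gradient f a, d⟫ t := by
      simpa using (hasDerivAt_id t).mul_const ⟪gradient f a, d⟫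
    have hquad : HasDerivAt (fun s : ℝ => ℓ / 2 * s ^ 2 * ‖d‖ ^ 2) (ℓ * t * ‖d‖ ^ 2) t := by
      refine (((hasDerivAt_pow 2 t).const_mul (ℓ / 2)).mul_const (‖d‖ ^ 2)).congr_deriv ?_
      push_cast
      ring
    exact (hfline.sub hlin).sub hquad
  have hψ' : ∀ t ∈ interior (Icc (0 : ℝ) 1), deriv ψ t ≤ 0 := by
    intro t ht
    rw [interior_Icc] at ht
    have hlip : ‖gradient f (a + t • d) - gradient f a‖ ≤ ℓ * (t * ‖d‖) := by
      simpa [norm_smul, abs_of_pos ht.1] using hsmooth (a + t • d) a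
    have hcs := real_inner_le_norm (gradient f (a + t • d) - gradient f a) d
    rw [(hψ t).deriv, ← inner_sub_left]
    nlinarith [norm_nonneg d]
  have hanti := antitoneOn_of_deriv_nonpos (convex_Icc 0 1)
    (fun t _ => (hψ t).continuousAt.continuousWithinAt)
    (fun t _ => (hψ t).differentiableAt.differentiableWithinAt) hψ'
  have := hanti (left_mem_Icc.2 zero_le_one) (right_mem_Icc.2 zero_le_one) zero_le_one
  simp only [ψ, zero_smul, one_smul, add_zero, zero_mul, one_pow, mul_one, ne_eq,
    OfNat.ofNat_ne_zero, not_false_eq_true, zero_pow, mul_zero, sub_zero] at this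
  rw [add_sub_cancel] at this
  linarith

theorem le_add_inner_add_sq_of_norm_sub_gradient_le {f : E → ℝ} {ℓ δ : ℝ} (hℓ : 0 < ℓ)
    (hf : Differentiable ℝ f)
    (hsmooth : ∀ a b : E, ‖gradient f a - gradient f b‖ ≤ ℓ * ‖a - b‖) {a G : E}
    (hG : ‖G - gradient f a‖ ≤ δ) (b : E) :
    f b ≤ f a + ⟪G, b - a⟫ + ℓ * ‖b - a‖ ^ 2 + δ ^ 2 / (2 * ℓ) := by
  have herr := inner_le_mul_norm_sq_add (w := b - a) ((norm_sub_rev _ _).trans_le hG)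
    (half_pos hℓ)
  rw [inner_sub_left] at herr
  have := le_add_inner_gradient_add_sq hf hsmooth a b
  linarith [show δ ^ 2 / (4 * (ℓ / 2)) = δ ^ 2 / (2 * ℓ) by ring]

theorem add_inner_add_sq_sub_le_of_norm_sub_gradient_le {f : E → ℝ} {μ δ : ℝ} (hμ : 0 < μ)
    (hsc : ConvexOn ℝ univ (fun x => f x - μ / 2 * ‖x‖ ^ 2)) {a G : E}
    (hf : DifferentiableAt ℝ f a) (hG : ‖G - gradient f a‖ ≤ δ) (b : E) :
    f a + ⟪G, b - a⟫ + μ / 4 * ‖b - a‖ ^ 2 - δ ^ 2 / μ ≤ f b := by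
  have herr := inner_le_mul_norm_sq_add (w := b - a) hG (by positivity : 0 < μ / 4)
  rw [inner_sub_left] at herr
  have := add_inner_gradient_add_sq_le hsc hf b
  linarith [show δ ^ 2 / (4 * (μ / 4)) = δ ^ 2 / μ by field_simp]

theorem inexact_agd_potential_le {X : Set E} (hX : Convex ℝ X) {f : E → ℝ} {ℓ μ δ τ : ℝ}
    (hℓ : 0 < ℓ) (hτ0 : 0 < τ) (hτ1 : τ ≤ 1) (hμτ : μ = 4 * ℓ * τ ^ 2)
    (hf : Differentiable ℝ f)
    (hsmooth : ∀ a b : E, ‖gradient f a - gradient f b‖ ≤ ℓ * ‖a - b‖)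
    (hsc : ConvexOn ℝ univ (fun x => f x - μ / 2 * ‖x‖ ^ 2))
    {xs : E} (hxs : xs ∈ X) {g : E → E} (hg : ∀ x : E, ‖g x - gradient f x‖ ≤ δ)
    {x y : ℕ → E} (hx0X : x 0 ∈ X)
    (hxupd : ∀ t : ℕ, IsProjOn X (y t - (1 / (2 * ℓ)) • g (y t)) (x (t + 1)))
    (hyupd : ∀ t : ℕ, y (t + 1) = x (t + 1) + ((1 - τ) / (1 + τ)) • (x (t + 1) - x t))
    (T : ℕ) :
    f (x T) - f xs + μ / 4 * ‖x T + ((1 + τ) / τ) • (y T - x T) - xs‖ ^ 2 ≤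
      (1 - τ) ^ T * (f (x 0) - f xs + μ / 4 * ‖x 0 + ((1 + τ) / τ) • (y 0 - x 0) - xs‖ ^ 2)
        + (δ ^ 2 / (2 * ℓ) + δ ^ 2 / μ) / τ := by
  have hμ : 0 < μ := by rw [hμτ]; positivity
  have hmem : ∀ t, x t ∈ X := fun t => t.casesOn hx0X fun t => (hxupd t).1
  have hz (t : ℕ) : x (t + 1) + ((1 + τ) / τ) • (y (t + 1) - x (t + 1))
      = x (t + 1) + ((1 - τ) / τ) • (x (t + 1) - x t) := by
    rw [hyupd, add_sub_cancel_left, smul_smul]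
    congr 2
    field_simp
  refine le_pow_mul_add_div_of_le_mul_add
    (Φ := fun t => f (x t) - f xs + μ / 4 * ‖x t + ((1 + τ) / τ) • (y t - x t) - xs‖ ^ 2)
    hτ0 hτ1 (by positivity) (fun t => ?_) T
  rw [hz, ← add_assoc]
  exact agd_potential_step hX hℓ hτ0 hτ1 hμτ (hmem t) hxs
    (le_add_inner_add_sq_of_norm_sub_gradient_le hℓ hf hsmooth (hg (y t)) (x (t + 1)))
    (add_inner_add_sq_sub_le_of_norm_sub_gradient_le hμ hsc (hf (y t)) (hg (y t)))
    (hxupd t)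

end InnerProductSpace

theorem inexact_agd_convergence_general
    {E : Type*} [NormedAddCommGroup E] [InnerProductSpace ℝ E] [CompleteSpace E]
    (X : Set E) (hXcv : Convex ℝ X)
    (f : E → ℝ) (ℓ μ δ : ℝ) (hμ : 0 < μ) (hμℓ : μ ≤ ℓ)
    (hfdiff : Differentiable ℝ f)
    (hsmooth : ∀ a b : E, ‖gradient f a - gradient f b‖ ≤ ℓ * ‖a - b‖)
    (hsc : ConvexOn ℝ Set.univ (fun x => f x - μ / 2 * ‖x‖ ^ 2))
    (xs : E) (hxs : xs ∈ X) (hmin : ∀ x ∈ X, f xs ≤ f x)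
    (g : E → E) (hg : ∀ x : E, ‖g x - gradient f x‖ ≤ δ)
    (x y : ℕ → E) (hx0 : x 0 = y 0) (hx0X : x 0 ∈ X)
    (hxupd : ∀ t : ℕ, IsProjOn X (y t - (1 / (2 * ℓ)) • g (y t)) (x (t + 1)))
    (hyupd : ∀ t : ℕ, y (t + 1) = x (t + 1) +
      ((2 - Real.sqrt (μ / ℓ)) / (2 + Real.sqrt (μ / ℓ))) • (x (t + 1) - x t))
    (T : ℕ) :
    f (x T) - f xs ≤
      Real.exp (-((T : ℝ) / 2) * Real.sqrt (μ / ℓ)) *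
        (f (x 0) - f xs + μ / 4 * ‖x 0 - xs‖ ^ 2) +
      Real.sqrt (ℓ / μ) * (1 / ℓ + 2 / μ) * δ ^ 2 := by
  have hℓ : 0 < ℓ := hμ.trans_le hμℓ
  have hq1 : Real.sqrt (μ / ℓ) ≤ 1 := Real.sqrt_le_one.2 ((div_le_one hℓ).2 hμℓ)
  set τ := Real.sqrt (μ / ℓ) / 2 with hτ
  have hμτ : μ = 4 * ℓ * τ ^ 2 := by
    rw [hτ, div_pow, Real.sq_sqrt (by positivity)]
    field_simp
    norm_num
  have hmomentum : (2 - Real.sqrt (μ / ℓ)) / (2 + Real.sqrt (μ / ℓ)) = (1 - τ) / (1 + τ) := by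
    rw [hτ]
    field_simp
  have hΦ := inexact_agd_potential_le hXcv hℓ (by positivity) (by linarith) hμτ hfdiff hsmooth
    hsc hxs hg hx0X hxupd (by simpa only [hmomentum] using hyupd) T
  have hexp : (1 - τ) ^ T ≤ Real.exp (-((T : ℝ) / 2) * Real.sqrt (μ / ℓ)) := by
    calc (1 - τ) ^ T ≤ Real.exp (-τ) ^ T :=
          pow_le_pow_left₀ (by linarith) (Real.one_sub_le_exp_neg τ) T
      _ = _ := by rw [← Real.exp_nat_mul, hτ]; ring_nf
  have hC : (δ ^ 2 / (2 * ℓ) + δ ^ 2 / μ) / τ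
      = Real.sqrt (ℓ / μ) * (1 / ℓ + 2 / μ) * δ ^ 2 := by
    rw [← inv_div μ ℓ, Real.sqrt_inv, hτ]
    field_simp
  have hΦ0 : 0 ≤ f (x 0) - f xs + μ / 4 * ‖x 0 - xs‖ ^ 2 :=
    add_nonneg (sub_nonneg.2 (hmin _ hx0X)) (by positivity)
  rw [← hx0, sub_self, smul_zero, add_zero, hC] at hΦ
  nlinarith [mul_le_mul_of_nonneg_right hexp hΦ0]

/-- Proposition 3.4 / Lemma A.4: Inexact-AGD.
AGD with a `δ`-inexact gradient oracle on an `ℓ`-smooth, `μ`-strongly convex function over a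
nonempty closed convex set `X`: starting from `x₀ = y₀ ∈ X`, with
`x_{t+1} = Π_X (y_t − g(y_t)/(2ℓ))` and
`y_{t+1} = x_{t+1} + ((2 − √(μ/ℓ))/(2 + √(μ/ℓ)))·(x_{t+1} − x_t)`, for every `T ≥ 0`,
`f(x_T) − f(x*) ≤ exp(−(T/2)√(μ/ℓ))·(f(x₀) − f(x*) + (μ/4)‖x₀ − x*‖²)
  + √(ℓ/μ)·(1/ℓ + 2/μ)·δ²`. -/
theorem inexact_agd_convergence
    {E : Type*} [NormedAddCommGroup E] [InnerProductSpace ℝ E] [CompleteSpace E]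
    (X : Set E) (hXne : X.Nonempty) (hXcl : IsClosed X) (hXcv : Convex ℝ X)
    (f : E → ℝ) (ℓ μ δ : ℝ) (hμ : 0 < μ) (hμℓ : μ ≤ ℓ) (hδ : 0 ≤ δ)
    (hfdiff : Differentiable ℝ f)
    (hsmooth : ∀ a b : E, ‖gradient f a - gradient f b‖ ≤ ℓ * ‖a - b‖)
    (hsc : ConvexOn ℝ Set.univ (fun x => f x - μ / 2 * ‖x‖ ^ 2))
    (xs : E) (hxs : xs ∈ X) (hmin : ∀ x ∈ X, f xs ≤ f x)
    (g : E → E) (hg : ∀ x : E, ‖g x - gradient f x‖ ≤ δ)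
    (x y : ℕ → E) (hx0 : x 0 = y 0) (hx0X : x 0 ∈ X)
    (hxupd : ∀ t : ℕ, IsProjOn X (y t - (1 / (2 * ℓ)) • g (y t)) (x (t + 1)))
    (hyupd : ∀ t : ℕ, y (t + 1) = x (t + 1) +
      ((2 - Real.sqrt (μ / ℓ)) / (2 + Real.sqrt (μ / ℓ))) • (x (t + 1) - x t))
    (T : ℕ) :
    f (x T) - f xs ≤
      Real.exp (-((T : ℝ) / 2) * Real.sqrt (μ / ℓ)) *
        (f (x 0) - f xs + μ / 4 * ‖x 0 - xs‖ ^ 2) +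
      Real.sqrt (ℓ / μ) * (1 / ℓ + 2 / μ) * δ ^ 2 :=
  inexact_agd_convergence_general X hXcv f ℓ μ δ hμ hμℓ hfdiff hsmooth hsc xs hxs hmin g hg x y hx0
    hx0X hxupd hyupd T
end

section
/- Let E be a real Hilbert space, X ⊆ E a nonempty closed convex set, and F : E → ℝ a differentiable function that is convex on X. Let ε > 0, δ ≥ 0, D > 0, and let x* ∈ X minimize F over X. Let x₀, x₀' ∈ X satisfy ‖x* − x₀‖ ≤ D and ‖x₀ − x₀'‖ ≤ δ. Set r = ε/D² and ε_r = (ε/2)·min{1, δ²/(4D²)}. Define F_r(x) = F(x) + (r/2)‖x − x₀‖² and F_r'(x) = F(x) + (r/2)‖x − x₀'‖², and let x_r, x_r' ∈ X satisfy F_r(x_r) − inf_{x∈X} F_r(x) ≤ ε_r and F_r'(x_r') − inf_{x∈X} F_r'(x) ≤ ε_r. Then F(x_r) − F(x*) ≤ ε and ‖x_r − x_r'‖² ≤ 4δ². -/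
/-!
`F_r = F + (r/2)‖· - c‖²` is `r`-strongly convex on `X`, so it has a minimizer `z_c` on the closed
convex set `X` (a minimizing sequence is Cauchy), and it grows quadratically around it:
`F_r x ≥ F_r z_c + (r/2)‖x - z_c‖²`. Hence every `ε_r`-minimizer lies within `√(2ε_r/r) ≤ δ/2`
of `z_c`. Adding the growth inequalities for the centers `x₀` and `x₀'` at each other's minimizers
cancels `F` and leaves `‖z_{x₀} - z_{x₀'}‖ ≤ ‖x₀ - x₀'‖ ≤ δ`, so `‖x_r - x_r'‖ ≤ 2δ`. The bound on
`F x_r - F x*` is the `ε_r`-optimality of `x_r` tested at `x*`, with `(r/2)‖x* - x₀‖² ≤ ε/2`.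
-/

open RealInnerProductSpace Filter Topology Set

lemma LowerSemicontinuousWithinAt.le_of_tendsto {α γ ι : Type*} [TopologicalSpace α]
    [LinearOrder γ] [TopologicalSpace γ] [OrderTopology γ] [DenselyOrdered γ]
    {f : α → γ} {s : Set α} {z : α} {l : Filter ι} [l.NeBot] {x : ι → α} {b : γ}
    (hf : LowerSemicontinuousWithinAt f s z) (hx : Tendsto x l (𝓝[s] z))
    (hfx : Tendsto (fun n => f (x n)) l (𝓝 b)) :
    f z ≤ b := by
  by_contra! hbz
  obtain ⟨c, hbc, hcz⟩ := exists_between hbz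
  obtain ⟨n, hcn, hnc⟩ := ((hx.eventually (hf c hcz)).and (hfx.eventually_lt_const hbc)).exists
  exact lt_asymm hcn hnc

section StrongConvexity

variable {E : Type*} [NormedAddCommGroup E] [NormedSpace ℝ E] {s : Set E} {f g : E → ℝ}
  {m : ℝ} {x y z : E}

lemma ConvexOn.add_strongConvexOn (hf : ConvexOn ℝ s f) (hg : StrongConvexOn s m g) :
    StrongConvexOn s m (f + g) := by
  show UniformConvexOn _ _ _
  simpa only [zero_add] using hf.uniformConvexOn_zero.add hg

lemma StrongConvexOn.sq_norm_sub_le (hf : StrongConvexOn s m f) (hx : x ∈ s) (hy : y ∈ s)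
    {b : ℝ} (hb : ∀ w ∈ s, b ≤ f w) :
    m / 8 * ‖x - y‖ ^ 2 ≤ (f x + f y) / 2 - b := by
  have hhalf : (0 : ℝ) ≤ 1 / 2 := by norm_num
  have hsum : (1 / 2 : ℝ) + 1 / 2 = 1 := by norm_num
  have hmid := hf.2 hx hy hhalf hhalf hsum
  have := hb _ (hf.1 hx hy hhalf hhalf hsum)
  simp only [smul_eq_mul] at hmid
  linarith

lemma StrongConvexOn.cauchySeq_of_tendsto (hf : StrongConvexOn s m f) (hm : 0 < m)
    {x : ℕ → E} (hxs : ∀ n, x n ∈ s) {b : ℝ} (hb : ∀ w ∈ s, b ≤ f w)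
    (hlim : Tendsto (fun n => f (x n)) atTop (𝓝 b)) :
    CauchySeq x := by
  refine Metric.cauchySeq_iff.2 fun ε hε => ?_
  obtain ⟨N, hN⟩ := (hlim.eventually_lt_const
    (lt_add_of_pos_right b (by positivity : 0 < m / 8 * ε ^ 2))).exists_forall_of_atTop
  refine ⟨N, fun n hn k hk => ?_⟩
  have h := hf.sq_norm_sub_le (hxs n) (hxs k) hb
  have hn' := hN n hn
  have hk' := hN k hk
  rw [dist_eq_norm]
  refine lt_of_pow_lt_pow_left₀ 2 hε.le (lt_of_mul_lt_mul_left ?_ (by positivity : 0 ≤ m / 8))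
  linarith

lemma StrongConvexOn.exists_isMinOn [CompleteSpace E] (hf : StrongConvexOn s m f) (hm : 0 < m)
    (hs : IsClosed s) (hne : s.Nonempty) (hlsc : LowerSemicontinuousOn f s)
    (hbdd : BddBelow (f '' s)) :
    ∃ z ∈ s, IsMinOn f s z := by
  set b := sInf (f '' s)
  have hb : ∀ w ∈ s, b ≤ f w := fun w hw => csInf_le hbdd ⟨w, hw, rfl⟩
  obtain ⟨u, -, hu, hus⟩ := exists_seq_tendsto_sInf (hne.image f) hbdd
  choose x hxs hfx using hus
  have hlim : Tendsto (fun n => f (x n)) atTop (𝓝 b) := by simpa only [hfx] using hu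
  obtain ⟨z, hz⟩ := cauchySeq_tendsto_of_complete (hf.cauchySeq_of_tendsto hm hxs hb hlim)
  have hzs : z ∈ s := hs.mem_of_tendsto hz (.of_forall hxs)
  have hfz : f z ≤ b :=
    LowerSemicontinuousWithinAt.le_of_tendsto (hlsc z hzs)
      (tendsto_nhdsWithin_iff.2 ⟨hz, .of_forall hxs⟩) hlim
  exact ⟨z, hzs, fun w hw => hfz.trans (hb w hw)⟩

lemma StrongConvexOn.add_sq_norm_sub_le (hf : StrongConvexOn s m f) (hz : z ∈ s)
    (hmin : IsMinOn f s z) (hx : x ∈ s) :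
    f z + m / 2 * ‖x - z‖ ^ 2 ≤ f x := by
  -- compare `f z` with `f` at the point `(1 - t) • z + t • x` of the segment and let `t → 0`
  have key : ∀ t ∈ Ioo (0 : ℝ) 1, (1 - t) * (m / 2 * ‖x - z‖ ^ 2) ≤ f x - f z := by
    rintro t ⟨ht₀, ht₁⟩
    have hconv := hf.2 hz hx (sub_nonneg.2 ht₁.le) ht₀.le (sub_add_cancel 1 t)
    have hle : f z ≤ f _ := hmin (hf.1 hz hx (sub_nonneg.2 ht₁.le) ht₀.le (sub_add_cancel 1 t))
    rw [norm_sub_rev] at hconv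
    simp only [smul_eq_mul] at hconv
    have : t * ((1 - t) * (m / 2 * ‖x - z‖ ^ 2)) ≤ t * (f x - f z) := by linarith
    exact le_of_mul_le_mul_left this ht₀
  have hlim : Tendsto (fun t : ℝ => (1 - t) * (m / 2 * ‖x - z‖ ^ 2)) (𝓝[>] 0)
      (𝓝 (m / 2 * ‖x - z‖ ^ 2)) := by
    have : Continuous fun t : ℝ => (1 - t) * (m / 2 * ‖x - z‖ ^ 2) := by fun_prop
    simpa using this.continuousWithinAt.tendsto (x := 0) (s := Ioi 0)
  have := le_of_tendsto hlim (eventually_of_mem (Ioo_mem_nhdsGT one_pos) key)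
  linarith

lemma StrongConvexOn.norm_sub_le_of_le_add (hf : StrongConvexOn s m f) (hm : 0 < m)
    (hz : z ∈ s) (hmin : IsMinOn f s z) (hy : y ∈ s) {ρ : ℝ} (hρ : 0 ≤ ρ)
    (hfy : f y ≤ f z + m / 2 * ρ ^ 2) :
    ‖y - z‖ ≤ ρ := by
  have := hf.add_sq_norm_sub_le hz hmin hy
  have : ‖y - z‖ ^ 2 ≤ ρ ^ 2 := le_of_mul_le_mul_left (by linarith) (half_pos hm)
  exact (sq_le_sq₀ (norm_nonneg _) hρ).1 this

end StrongConvexity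

section Regularization

variable {E : Type*} [NormedAddCommGroup E] [InnerProductSpace ℝ E] {s : Set E} {F : E → ℝ}

/-- The paper's `F_r`, with regularization center `c`. -/
noncomputable def regularized (F : E → ℝ) (r : ℝ) (c : E) (x : E) : ℝ :=
  F x + r / 2 * ‖x - c‖ ^ 2

lemma strongConvexOn_sq_norm_sub (hs : Convex ℝ s) (m : ℝ) (c : E) :
    StrongConvexOn s m fun x => m / 2 * ‖x - c‖ ^ 2 := by
  refine ⟨hs, fun x _ y _ a b ha hb hab => le_of_eq ?_⟩
  dsimp only
  have hcomb : a • x + b • y - c = a • (x - c) + b • (y - c) := by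
    rw [smul_sub, smul_sub, sub_add_sub_comm, ← add_smul, hab, one_smul]
  have hdiff : x - y = (x - c) - (y - c) := by abel
  rw [hcomb, hdiff]
  generalize x - c = u, y - c = v
  rw [norm_add_sq_real, norm_sub_sq_real, norm_smul, norm_smul, real_inner_smul_left,
    real_inner_smul_right, Real.norm_of_nonneg ha, Real.norm_of_nonneg hb, smul_eq_mul, smul_eq_mul]
  obtain rfl := eq_sub_of_add_eq hab
  ring

lemma ConvexOn.strongConvexOn_regularized (hF : ConvexOn ℝ s F) (r : ℝ) (c : E) :
    StrongConvexOn s r (regularized F r c) :=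
  hF.add_strongConvexOn (strongConvexOn_sq_norm_sub hF.1 r c)

lemma ConvexOn.norm_sub_le_of_isMinOn_regularized (hF : ConvexOn ℝ s F) {r : ℝ} (hr : 0 < r)
    {c c' z z' : E} (hz : z ∈ s) (hz' : z' ∈ s) (hmin : IsMinOn (regularized F r c) s z)
    (hmin' : IsMinOn (regularized F r c') s z') :
    ‖z - z'‖ ≤ ‖c - c'‖ := by
  have h := (hF.strongConvexOn_regularized r c).add_sq_norm_sub_le hz hmin hz'
  have h' := (hF.strongConvexOn_regularized r c').add_sq_norm_sub_le hz' hmin' hz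
  -- adding the two growth inequalities cancels `F`
  have hpar : ‖z' - c‖ ^ 2 - ‖z - c‖ ^ 2 + ‖z - c'‖ ^ 2 - ‖z' - c'‖ ^ 2
      = 2 * ⟪z - z', c - c'⟫ := by
    simp only [norm_sub_sq_real, inner_sub_left, inner_sub_right]
    ring
  have hcs := real_inner_le_norm (z - z') (c - c')
  unfold regularized at h h'
  rw [norm_sub_rev z' z] at h
  have : r * ‖z - z'‖ ^ 2 ≤ r * (‖z - z'‖ * ‖c - c'‖) := by nlinarith
  have := le_of_mul_le_mul_left this hr
  nlinarith [norm_nonneg (z - z'), norm_nonneg (c - c')]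

lemma ConvexOn.exists_isMinOn_regularized [CompleteSpace E] (hF : ConvexOn ℝ s F)
    (hFlsc : LowerSemicontinuousOn F s) (hs : IsClosed s) (hne : s.Nonempty)
    (hbdd : BddBelow (F '' s)) {r : ℝ} (hr : 0 < r) (c : E) :
    ∃ z ∈ s, IsMinOn (regularized F r c) s z := by
  obtain ⟨b, hb⟩ := hbdd
  have hsq : Continuous fun x => r / 2 * ‖x - c‖ ^ 2 := by fun_prop
  refine (hF.strongConvexOn_regularized r c).exists_isMinOn hr hs hne
    (hFlsc.add (hsq.lowerSemicontinuous.lowerSemicontinuousOn s)) ⟨b, ?_⟩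
  rintro _ ⟨x, hx, rfl⟩
  exact le_add_of_le_of_nonneg (hb ⟨x, hx, rfl⟩) (by positivity)

end Regularization

lemma half_mul_min_le {ε δ D : ℝ} (hε : 0 < ε) (hD : 0 < D) :
    ε / 2 * min 1 (δ ^ 2 / (4 * D ^ 2)) ≤ ε / 2 ∧
      ε / 2 * min 1 (δ ^ 2 / (4 * D ^ 2)) ≤ ε / D ^ 2 / 2 * (δ / 2) ^ 2 := by
  have : ε / D ^ 2 / 2 * (δ / 2) ^ 2 = ε / 2 * (δ ^ 2 / (4 * D ^ 2)) := by
    field_simp; ring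
  rw [this]
  exact ⟨mul_le_of_le_one_right (by positivity) (min_le_left _ _), by gcongr; exact min_le_right _ _⟩

theorem regularized_min_inexact_init_general
    {E : Type*} [NormedAddCommGroup E] [InnerProductSpace ℝ E] [CompleteSpace E]
    (X : Set E) (hXcl : IsClosed X)
    (F : E → ℝ) (hFdiff : Differentiable ℝ F) (hFcv : ConvexOn ℝ X F)
    (ε δ D : ℝ) (hε : 0 < ε) (hδ : 0 ≤ δ) (hD : 0 < D)
    (xs : E) (hxs : xs ∈ X) (hmin : ∀ x ∈ X, F xs ≤ F x)
    (x₀ x₀' : E)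
    (hinit : ‖xs - x₀‖ ≤ D) (hdev : ‖x₀ - x₀'‖ ≤ δ)
    (r εr : ℝ) (hr : r = ε / D ^ 2) (hεr : εr = ε / 2 * min 1 (δ ^ 2 / (4 * D ^ 2)))
    (xr xr' : E) (hxrX : xr ∈ X) (hxr'X : xr' ∈ X)
    (hxr : ∀ x ∈ X,
      F xr + r / 2 * ‖xr - x₀‖ ^ 2 ≤ F x + r / 2 * ‖x - x₀‖ ^ 2 + εr)
    (hxr' : ∀ x ∈ X,
      F xr' + r / 2 * ‖xr' - x₀'‖ ^ 2 ≤ F x + r / 2 * ‖x - x₀'‖ ^ 2 + εr) :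
    F xr - F xs ≤ ε ∧ ‖xr - xr'‖ ^ 2 ≤ 4 * δ ^ 2 := by
  have hr₀ : 0 < r := hr ▸ by positivity
  obtain ⟨hεr_half, hεr_sq⟩ : εr ≤ ε / 2 ∧ εr ≤ r / 2 * (δ / 2) ^ 2 := by
    rw [hεr, hr]; exact half_mul_min_le hε hD
  have hreg : ∀ c, StrongConvexOn X r (regularized F r c) := hFcv.strongConvexOn_regularized r
  have hexists : ∀ c, ∃ z ∈ X, IsMinOn (regularized F r c) X z :=
    hFcv.exists_isMinOn_regularized (hFdiff.continuous.lowerSemicontinuous.lowerSemicontinuousOn X)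
      hXcl ⟨xs, hxs⟩ ⟨F xs, forall_mem_image.2 hmin⟩ hr₀
  obtain ⟨z, hz, hzmin⟩ := hexists x₀
  obtain ⟨z', hz', hz'min⟩ := hexists x₀'
  have hxrz : ‖xr - z‖ ≤ δ / 2 := (hreg x₀).norm_sub_le_of_le_add hr₀ hz hzmin hxrX
    (by positivity) (by unfold regularized; linarith [hxr z hz])
  have hxr'z' : ‖xr' - z'‖ ≤ δ / 2 := (hreg x₀').norm_sub_le_of_le_add hr₀ hz' hz'min hxr'X
    (by positivity) (by unfold regularized; linarith [hxr' z' hz'])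
  have hzz' : ‖z - z'‖ ≤ δ :=
    (hFcv.norm_sub_le_of_isMinOn_regularized hr₀ hz hz' hzmin hz'min).trans hdev
  constructor
  · have hcenter : r / 2 * ‖xs - x₀‖ ^ 2 ≤ ε / 2 := calc
      r / 2 * ‖xs - x₀‖ ^ 2 ≤ r / 2 * D ^ 2 := by gcongr
      _ = ε / 2 := by rw [hr]; field_simp
    have : 0 ≤ r / 2 * ‖xr - x₀‖ ^ 2 := by positivity
    linarith [hxr xs hxs]
  · have : ‖xr - xr'‖ ≤ 2 * δ := calc
      ‖xr - xr'‖ ≤ ‖xr - z'‖ + ‖z' - xr'‖ := norm_sub_le_norm_sub_add_norm_sub _ _ _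
      _ ≤ ‖xr - z‖ + ‖z - z'‖ + ‖xr' - z'‖ := by
        rw [norm_sub_rev z']; gcongr; exact norm_sub_le_norm_sub_add_norm_sub _ _ _
      _ ≤ 2 * δ := by linarith
    calc ‖xr - xr'‖ ^ 2 ≤ (2 * δ) ^ 2 := by gcongr
      _ = 4 * δ ^ 2 := by ring

/-- Theorem 3.3: regularized Algorithm 1 under the δ-inexact initialization
oracle.  With `r = ε/D²`, `ε_r = (ε/2)·min{1, δ²/(4D²)}`, for any outputs `xr, xr'` that solve
the two regularized problems (regularization centers `x₀` and `x₀'` with `‖x₀ − x₀'‖ ≤ δ`)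
to accuracy `ε_r`, one has `F xr − F x* ≤ ε` and `‖xr − xr'‖² ≤ 4δ²`. -/
theorem regularized_min_inexact_init
    {E : Type*} [NormedAddCommGroup E] [InnerProductSpace ℝ E] [CompleteSpace E]
    (X : Set E) (hXne : X.Nonempty) (hXcl : IsClosed X) (hXcv : Convex ℝ X)
    (F : E → ℝ) (hFdiff : Differentiable ℝ F) (hFcv : ConvexOn ℝ X F)
    (ε δ D : ℝ) (hε : 0 < ε) (hδ : 0 ≤ δ) (hD : 0 < D)
    (xs : E) (hxs : xs ∈ X) (hmin : ∀ x ∈ X, F xs ≤ F x)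
    (x₀ x₀' : E) (hx₀ : x₀ ∈ X) (hx₀' : x₀' ∈ X)
    (hinit : ‖xs - x₀‖ ≤ D) (hdev : ‖x₀ - x₀'‖ ≤ δ)
    (r εr : ℝ) (hr : r = ε / D ^ 2) (hεr : εr = ε / 2 * min 1 (δ ^ 2 / (4 * D ^ 2)))
    (xr xr' : E) (hxrX : xr ∈ X) (hxr'X : xr' ∈ X)
    (hxr : ∀ x ∈ X,
      F xr + r / 2 * ‖xr - x₀‖ ^ 2 ≤ F x + r / 2 * ‖x - x₀‖ ^ 2 + εr)
    (hxr' : ∀ x ∈ X,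
      F xr' + r / 2 * ‖xr' - x₀'‖ ^ 2 ≤ F x + r / 2 * ‖x - x₀'‖ ^ 2 + εr) :
    F xr - F xs ≤ ε ∧ ‖xr - xr'‖ ^ 2 ≤ 4 * δ ^ 2 :=
  regularized_min_inexact_init_general X hXcl F hFdiff hFcv ε δ D hε hδ hD xs hxs hmin x₀ x₀' hinit
    hdev r εr hr hεr xr xr' hxrX hxr'X hxr hxr'
end

section
/- Let E be a real Hilbert space, X ⊆ E a nonempty closed convex set, and F : E → ℝ a differentiable function that is convex on X. Let ℓ > 0, D > 0, δ ≥ 0, and 0 < ε ≤ ℓD². Let x* ∈ X minimize F over X and let x₀ ∈ X satisfy ‖x* − x₀‖ ≤ D. Set r = ε/D² and ε_r = 6δ²D³·√(ℓ/(2ε³)). Define F_r(x) = F(x) + (r/2)‖x − x₀‖², and let x_r, x_r' ∈ X satisfy F_r(x_r) − inf_{x∈X} F_r(x) ≤ ε_r and F_r(x_r') − inf_{x∈X} F_r(x) ≤ ε_r. Then F(x_r) − F(x*) ≤ ε_r + ε/2 and ‖x_r − x_r'‖² ≤ 48·δ²·D⁵·√(ℓ/(2ε⁵)). -/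
/-!
Adding `r/2 ‖x - x₀‖²` to a convex function makes it `r`-strongly convex. Comparing two
`η`-approximate minimizers of an `r`-strongly convex function with their midpoint gives
`r/8 ‖x - y‖² ≤ η`, which with `r = ε/D²` and `η = ε_r` is the reproducibility bound. The
accuracy bound compares `x_r` with the competitor `x*`, at which the regularizer costs at most
`r/2 D² = ε/2`.
-/

section StrongConvexity

variable {E : Type*} [NormedAddCommGroup E] [InnerProductSpace ℝ E] {s : Set E} {f : E → ℝ}

lemma ConvexOn.strongConvexOn_add_sq_norm_sub (hf : ConvexOn ℝ s f) (m : ℝ) (c : E) :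
    StrongConvexOn s m fun x ↦ f x + m / 2 * ‖x - c‖ ^ 2 := by
  rw [strongConvexOn_iff_convex]
  -- the quadratic parts cancel, leaving `f` plus an affine function
  refine (hf.add (((innerSL ℝ (-m • c)).toLinearMap.convexOn hf.1).add_const
    (m / 2 * ‖c‖ ^ 2))).congr fun x _ ↦ ?_
  simp only [Pi.add_apply, ContinuousLinearMap.coe_coe, innerSL_apply_apply,
    real_inner_smul_left, norm_sub_sq_real, real_inner_comm x c]
  ring

lemma StrongConvexOn.sq_norm_sub_le_of_approx_min {m η : ℝ} (hf : StrongConvexOn s m f)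
    (hm : 0 < m) {x y : E} (hx : x ∈ s) (hy : y ∈ s)
    (hx_min : ∀ z ∈ s, f x ≤ f z + η) (hy_min : ∀ z ∈ s, f y ≤ f z + η) :
    ‖x - y‖ ^ 2 ≤ 8 * η / m := by
  have hmid := hf.2 hx hy (by norm_num : (0 : ℝ) ≤ 1 / 2) (by norm_num : (0 : ℝ) ≤ 1 / 2)
    (by norm_num)
  have hmid_mem : (1 / 2 : ℝ) • x + (1 / 2 : ℝ) • y ∈ s :=
    hf.1 hx hy (by norm_num) (by norm_num) (by norm_num)
  have hx_mid := hx_min _ hmid_mem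
  have hy_mid := hy_min _ hmid_mem
  simp only [smul_eq_mul] at hmid
  rw [le_div_iff₀ hm]
  linarith

end StrongConvexity

lemma Real.sqrt_div_mul_pow_eq_mul_sqrt {ε : ℝ} (hε : 0 < ε) (a b : ℝ) (n : ℕ) :
    √(a / (b * ε ^ n)) = ε * √(a / (b * ε ^ (n + 2))) := by
  rw [← Real.sqrt_sq hε.le, ← Real.sqrt_mul (sq_nonneg ε), Real.sqrt_sq hε.le]
  congr 1
  field_simp
  ring

theorem regularized_min_inexact_gradient_general
    {E : Type*} [NormedAddCommGroup E] [InnerProductSpace ℝ E]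
    (X : Set E)
    (F : E → ℝ) (hFcv : ConvexOn ℝ X F)
    (ℓ D δ ε : ℝ) (hD : 0 < D)
    (hε : 0 < ε)
    (xs : E) (hxs : xs ∈ X)
    (x₀ : E) (hinit : ‖xs - x₀‖ ≤ D)
    (r εr : ℝ) (hr : r = ε / D ^ 2)
    (hεr : εr = 6 * δ ^ 2 * D ^ 3 * Real.sqrt (ℓ / (2 * ε ^ 3)))
    (xr xr' : E) (hxrX : xr ∈ X) (hxr'X : xr' ∈ X)
    (hxr : ∀ x ∈ X,
      F xr + r / 2 * ‖xr - x₀‖ ^ 2 ≤ F x + r / 2 * ‖x - x₀‖ ^ 2 + εr)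
    (hxr' : ∀ x ∈ X,
      F xr' + r / 2 * ‖xr' - x₀‖ ^ 2 ≤ F x + r / 2 * ‖x - x₀‖ ^ 2 + εr) :
    F xr - F xs ≤ εr + ε / 2 ∧
    ‖xr - xr'‖ ^ 2 ≤ 48 * δ ^ 2 * D ^ 5 * Real.sqrt (ℓ / (2 * ε ^ 5)) := by
  have hr_pos : 0 < r := by rw [hr]; positivity
  constructor
  · have hreg : r / 2 * ‖xs - x₀‖ ^ 2 ≤ ε / 2 :=
      calc r / 2 * ‖xs - x₀‖ ^ 2 ≤ r / 2 * D ^ 2 := by gcongr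
        _ = ε / 2 := by rw [hr]; field_simp
    have hcompare := hxr xs hxs
    have hreg_nonneg : 0 ≤ r / 2 * ‖xr - x₀‖ ^ 2 := by positivity
    linarith
  · calc ‖xr - xr'‖ ^ 2 ≤ 8 * εr / r :=
          (hFcv.strongConvexOn_add_sq_norm_sub r x₀).sq_norm_sub_le_of_approx_min hr_pos hxrX
            hxr'X hxr hxr'
      _ = 48 * δ ^ 2 * D ^ 5 * √(ℓ / (2 * ε ^ 5)) := by
          have hsqrt : √(ℓ / (2 * ε ^ 3)) = ε * √(ℓ / (2 * ε ^ 5)) :=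
            Real.sqrt_div_mul_pow_eq_mul_sqrt hε ℓ 2 3
          rw [hεr, hr, hsqrt]
          field_simp
          ring

/-- Theorem 3.5: regularized Algorithm 1 under the δ-inexact deterministic
gradient oracle.  With `r = ε/D²`, `ε_r = 6δ²D³√(ℓ/(2ε³))`, for any two outputs `xr, xr'`
that solve the regularized problem (center `x₀`) to accuracy `ε_r`, one has
`F xr − F x* ≤ ε_r + ε/2` and `‖xr − xr'‖² ≤ 48δ²D⁵√(ℓ/(2ε⁵))`. -/
theorem regularized_min_inexact_gradient
    {E : Type*} [NormedAddCommGroup E] [InnerProductSpace ℝ E] [CompleteSpace E]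
    (X : Set E) (hXne : X.Nonempty) (hXcl : IsClosed X) (hXcv : Convex ℝ X)
    (F : E → ℝ) (hFdiff : Differentiable ℝ F) (hFcv : ConvexOn ℝ X F)
    (ℓ D δ ε : ℝ) (hℓ : 0 < ℓ) (hD : 0 < D) (hδ : 0 ≤ δ)
    (hε : 0 < ε) (hεℓ : ε ≤ ℓ * D ^ 2)
    (xs : E) (hxs : xs ∈ X) (hmin : ∀ x ∈ X, F xs ≤ F x)
    (x₀ : E) (hx₀ : x₀ ∈ X) (hinit : ‖xs - x₀‖ ≤ D)
    (r εr : ℝ) (hr : r = ε / D ^ 2)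
    (hεr : εr = 6 * δ ^ 2 * D ^ 3 * Real.sqrt (ℓ / (2 * ε ^ 3)))
    (xr xr' : E) (hxrX : xr ∈ X) (hxr'X : xr' ∈ X)
    (hxr : ∀ x ∈ X,
      F xr + r / 2 * ‖xr - x₀‖ ^ 2 ≤ F x + r / 2 * ‖x - x₀‖ ^ 2 + εr)
    (hxr' : ∀ x ∈ X,
      F xr' + r / 2 * ‖xr' - x₀‖ ^ 2 ≤ F x + r / 2 * ‖x - x₀‖ ^ 2 + εr) :
    F xr - F xs ≤ εr + ε / 2 ∧
    ‖xr - xr'‖ ^ 2 ≤ 48 * δ ^ 2 * D ^ 5 * Real.sqrt (ℓ / (2 * ε ^ 5)) :=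
  regularized_min_inexact_gradient_general X F hFcv ℓ D δ ε hD hε xs hxs x₀ hinit r εr hr hεr xr xr'
    hxrX hxr'X hxr hxr'
end

section
/- Let H be a real Hilbert space, S ⊆ H a nonempty bounded closed convex set, ℓ > 0, L ≥ 0, and G : H → H a map that is monotone and ℓ-Lipschitz on S with ‖G(z)‖ ≤ L for all z ∈ S. Let 0 < α ≤ 1/ℓ. For z ∈ S define P_z(w) = Π_S(z − α·G(w)) and the one-step Extragradient map EG(z) = P_z(P_z(z)). Then for all z, z' ∈ S: ‖EG(z) − EG(z')‖ ≤ ‖z − z'‖ + 2·L·ℓ²·α³. -/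
/-!
Compare the Extragradient step with the proximal point step `w = Π_S(z − α G w)`. By
monotonicity of `G` and firm nonexpansiveness of `Π_S`, `z ↦ w` is nonexpansive. Each of the
two projected steps of Extragradient freezes `G` at a point of `S` instead of at `w`, so by the
`ℓ`-Lipschitz bound it moves the distance to `w` by a factor `αℓ`; starting from
`‖z − w‖ ≤ α‖G w‖ ≤ αL`, the Extragradient iterate ends within `Lℓ²α³` of `w`, and the triangle
inequality through `w` and `w'` gives the claim.
-/

open RealInnerProductSpace

open Set

theorem exists_fixedPt_of_dist_le_mul {X : Type*} [MetricSpace X] {s : Set X} {T : X → X}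
    {K : ℝ} (hs : IsComplete s) (hne : s.Nonempty) (hT : MapsTo T s s) (hK : K < 1)
    (hdist : ∀ x ∈ s, ∀ y ∈ s, dist (T x) (T y) ≤ K * dist x y) : ∃ x ∈ s, T x = x := by
  obtain ⟨x, hx⟩ := hne
  have hcontr : ContractingWith K.toNNReal (hT.restrict T s s) :=
    ⟨Real.toNNReal_lt_one.2 hK, LipschitzWith.of_dist_le' fun a b => hdist a a.2 b b.2⟩
  obtain ⟨y, hy, hfix, -⟩ := hcontr.exists_fixedPoint' hs hT hx (edist_ne_top _ _)
  exact ⟨y, hy, hfix⟩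

theorem norm_le_of_sq_le_inner {E : Type*} [NormedAddCommGroup E] [InnerProductSpace ℝ E]
    {x y : E} (h : ‖y‖ ^ 2 ≤ ⟪x, y⟫) : ‖y‖ ≤ ‖x‖ := by
  nlinarith [real_inner_le_norm x y, norm_nonneg x, norm_nonneg y]

theorem norm_sub_smul_le_of_sq_le_inner {H : Type*} [NormedAddCommGroup H]
    [InnerProductSpace ℝ H] {d e : H} {M : ℝ} (hM : 1 ≤ M) (hde : ‖d‖ ^ 2 ≤ ⟪e, d⟫)
    (he : ‖e‖ ≤ M * ‖d‖) : ‖d - (M ^ 2)⁻¹ • e‖ ≤ (1 - (M ^ 2)⁻¹ / 2) * ‖d‖ := by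
  set γ := (M ^ 2)⁻¹
  have hγ : 0 < γ := by positivity
  have hγ1 : γ ≤ 1 := inv_le_one_of_one_le₀ (one_le_pow₀ hM)
  have hγM : γ * M ^ 2 = 1 := inv_mul_cancel₀ (by positivity)
  have he2 : ‖e‖ ^ 2 ≤ M ^ 2 * ‖d‖ ^ 2 := by
    rw [← mul_pow]; exact pow_le_pow_left₀ (norm_nonneg e) he 2
  have hsq : ‖d - γ • e‖ ^ 2 ≤ (1 - γ) * ‖d‖ ^ 2 := by
    rw [norm_sub_sq_real, norm_smul, inner_smul_right, real_inner_comm, Real.norm_of_nonneg hγ.le]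
    have : γ ^ 2 * ‖e‖ ^ 2 ≤ γ * ‖d‖ ^ 2 := by
      calc γ ^ 2 * ‖e‖ ^ 2 ≤ γ ^ 2 * (M ^ 2 * ‖d‖ ^ 2) := by gcongr
        _ = γ * ‖d‖ ^ 2 := by rw [← mul_assoc, sq γ, mul_assoc γ, hγM, mul_one]
    nlinarith
  rw [← pow_le_pow_iff_left₀ (norm_nonneg _) (by nlinarith [norm_nonneg d]) two_ne_zero]
  nlinarith [sq_nonneg γ, norm_nonneg d]

theorem isProjOn_self {H : Type*} [NormedAddCommGroup H] {S : Set H} {v : H} (hv : v ∈ S) :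
    IsProjOn S v v :=
  ⟨hv, fun w _ => by simp⟩

section Projection

variable {H : Type*} [NormedAddCommGroup H] [InnerProductSpace ℝ H] {S : Set H} {v v' p p' : H}

theorem exists_isProjOn [CompleteSpace H] (hne : S.Nonempty) (hcl : IsClosed S)
    (hcv : Convex ℝ S) (v : H) : ∃ p, IsProjOn S v p := by
  obtain ⟨p, hp, hmin⟩ := exists_norm_eq_iInf_of_complete_convex hne hcl.isComplete hcv v
  refine ⟨p, hp, fun w hw => hmin ▸ ciInf_le ⟨0, ?_⟩ (⟨w, hw⟩ : S)⟩
  rintro _ ⟨u, rfl⟩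
  exact norm_nonneg _

theorem isProjOn_iff_inner_le_zero (hcv : Convex ℝ S) (hp : p ∈ S) :
    IsProjOn S v p ↔ ∀ w ∈ S, ⟪v - p, w - p⟫ ≤ 0 := by
  have : Nonempty S := ⟨⟨p, hp⟩⟩
  have hbdd : BddBelow (range fun w : S => ‖v - w‖) := ⟨0, by rintro _ ⟨u, rfl⟩; positivity⟩
  rw [← norm_eq_iInf_iff_real_inner_le_zero hcv hp]
  exact ⟨fun h => le_antisymm (le_ciInf fun w => h.2 w w.2) (ciInf_le hbdd ⟨p, hp⟩),
    fun h => ⟨hp, fun w hw => h ▸ ciInf_le hbdd ⟨w, hw⟩⟩⟩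

theorem IsProjOn.inner_le_zero (hcv : Convex ℝ S) (h : IsProjOn S v p) {w : H} (hw : w ∈ S) :
    ⟪v - p, w - p⟫ ≤ 0 :=
  (isProjOn_iff_inner_le_zero hcv h.1).1 h w hw

theorem IsProjOn.norm_sub_sq_le_inner (hcv : Convex ℝ S) (h : IsProjOn S v p)
    (h' : IsProjOn S v' p') : ‖p - p'‖ ^ 2 ≤ ⟪v - v', p - p'⟫ := by
  have h₁ := h.inner_le_zero hcv h'.1
  have h₂ := h'.inner_le_zero hcv h.1
  rw [← real_inner_self_eq_norm_sq]
  have : ⟪v - v', p - p'⟫ - ⟪p - p', p - p'⟫ = -⟪v - p, p' - p⟫ - ⟪v' - p', p - p'⟫ := by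
    simp only [inner_sub_left, inner_sub_right, real_inner_comm p p']
    ring
  linarith

theorem IsProjOn.norm_sub_le (hcv : Convex ℝ S) (h : IsProjOn S v p) (h' : IsProjOn S v' p') :
    ‖p - p'‖ ≤ ‖v - v'‖ :=
  norm_le_of_sq_le_inner (h.norm_sub_sq_le_inner hcv h')

end Projection

def IsProximalPointStep {H : Type*} [NormedAddCommGroup H] [Module ℝ H]
    (S : Set H) (G : H → H) (α : ℝ) (z w : H) : Prop :=
  IsProjOn S (z - α • G w) w

section ProximalPoint

variable {H : Type*} [NormedAddCommGroup H] [InnerProductSpace ℝ H] {S : Set H} {G : H → H}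
  {α ℓ : ℝ} {z z' w w' : H}

theorem exists_isProximalPointStep [CompleteSpace H] (hne : S.Nonempty) (hcl : IsClosed S)
    (hcv : Convex ℝ S) (hℓ : 0 ≤ ℓ) (hα : 0 ≤ α)
    (hmono : ∀ u ∈ S, ∀ v ∈ S, 0 ≤ ⟪G u - G v, u - v⟫)
    (hlip : ∀ u ∈ S, ∀ v ∈ S, ‖G u - G v‖ ≤ ℓ * ‖u - v‖) (z : H) :
    ∃ w, IsProximalPointStep S G α z w := by
  choose proj hproj using exists_isProjOn hne hcl hcv
  -- `w` is the fixed point of `u ↦ Π_S(u − γ F u)`, a contraction on `S` because `F` is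
  -- strongly monotone with modulus 1 and `M`-Lipschitz there, whatever the size of `α ℓ`.
  set F : H → H := fun u => u - z + α • G u
  set M := 1 + α * ℓ
  set γ := (M ^ 2)⁻¹
  have hγ : 0 < γ := by positivity
  have hcontr : ∀ u ∈ S, ∀ u' ∈ S,
      ‖proj (u - γ • F u) - proj (u' - γ • F u')‖ ≤ (1 - γ / 2) * ‖u - u'‖ := by
    intro u hu u' hu'
    have hFd : F u - F u' = (u - u') + α • (G u - G u') := by simp only [F]; module
    calc ‖proj (u - γ • F u) - proj (u' - γ • F u')‖
        ≤ ‖(u - γ • F u) - (u' - γ • F u')‖ := (hproj _).norm_sub_le hcv (hproj _)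
      _ = ‖(u - u') - γ • (F u - F u')‖ := by rw [smul_sub]; congr 1; abel
      _ ≤ (1 - γ / 2) * ‖u - u'‖ := by
        refine norm_sub_smul_le_of_sq_le_inner (M := M) (by nlinarith) ?_ ?_
        · rw [hFd, inner_add_left, real_inner_smul_left, real_inner_self_eq_norm_sq]
          nlinarith [hmono u hu u' hu']
        · calc ‖F u - F u'‖ ≤ ‖u - u'‖ + α * ‖G u - G u'‖ := by
                rw [hFd, ← norm_smul_of_nonneg hα]; exact norm_add_le _ _
            _ ≤ M * ‖u - u'‖ := by nlinarith [hlip u hu u' hu']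
  obtain ⟨w, hwS, hfix⟩ := exists_fixedPt_of_dist_le_mul (K := 1 - γ / 2) hcl.isComplete hne
    (fun u _ => (hproj (u - γ • F u)).1) (by linarith)
    (fun u hu u' hu' => by simpa only [dist_eq_norm] using hcontr u hu u' hu')
  refine ⟨w, (isProjOn_iff_inner_le_zero hcv hwS).2 fun u hu => ?_⟩
  have hvi := (hproj (w - γ • F w)).inner_le_zero hcv hu
  rw [hfix, sub_sub_cancel_left, inner_neg_left, real_inner_smul_left] at hvi
  have : z - α • G w - w = -F w := by simp only [F]; abel
  rw [this, inner_neg_left]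
  nlinarith

theorem IsProximalPointStep.norm_sub_le_norm_sub (hcv : Convex ℝ S) (hα : 0 ≤ α)
    (hmono : ∀ u ∈ S, ∀ v ∈ S, 0 ≤ ⟪G u - G v, u - v⟫)
    (hw : IsProximalPointStep S G α z w) (hw' : IsProximalPointStep S G α z' w') :
    ‖w - w'‖ ≤ ‖z - z'‖ := by
  refine norm_le_of_sq_le_inner ((hw.norm_sub_sq_le_inner hcv hw').trans ?_)
  have hvv' : z - α • G w - (z' - α • G w') = (z - z') - α • (G w - G w') := by module
  rw [hvv', inner_sub_left, real_inner_smul_left]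
  nlinarith [hmono w hw.1 w' hw'.1]

theorem IsProximalPointStep.norm_sub_le_of_isProjOn (hcv : Convex ℝ S) (hα : 0 ≤ α)
    (hlip : ∀ u ∈ S, ∀ v ∈ S, ‖G u - G v‖ ≤ ℓ * ‖u - v‖) (hw : IsProximalPointStep S G α z w)
    {u p : H} (hu : u ∈ S) (hp : IsProjOn S (z - α • G u) p) : ‖p - w‖ ≤ α * ℓ * ‖u - w‖ :=
  calc ‖p - w‖ ≤ ‖z - α • G u - (z - α • G w)‖ := hp.norm_sub_le hcv hw
    _ = α * ‖G u - G w‖ := by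
        rw [sub_sub_sub_cancel_left, ← smul_sub, norm_smul_of_nonneg hα, norm_sub_rev]
    _ ≤ α * ℓ * ‖u - w‖ := by rw [mul_assoc]; gcongr; exact hlip u hu w hw.1

theorem IsProximalPointStep.norm_sub_le_mul_norm (hcv : Convex ℝ S) (hα : 0 ≤ α)
    (hw : IsProximalPointStep S G α z w) (hz : z ∈ S) : ‖z - w‖ ≤ α * ‖G w‖ :=
  calc ‖z - w‖ ≤ ‖z - (z - α • G w)‖ := (isProjOn_self hz).norm_sub_le hcv hw
    _ = α * ‖G w‖ := by rw [sub_sub_cancel, norm_smul_of_nonneg hα]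

theorem IsProximalPointStep.norm_extragradient_sub_le (hcv : Convex ℝ S) (hℓ : 0 ≤ ℓ)
    (hα : 0 ≤ α) (hlip : ∀ u ∈ S, ∀ v ∈ S, ‖G u - G v‖ ≤ ℓ * ‖u - v‖) {L : ℝ}
    (hbound : ∀ u ∈ S, ‖G u‖ ≤ L) (hw : IsProximalPointStep S G α z w) (hz : z ∈ S)
    {p q : H} (hp : IsProjOn S (z - α • G z) p) (hq : IsProjOn S (z - α • G p) q) :
    ‖q - w‖ ≤ L * ℓ ^ 2 * α ^ 3 := by
  have hαℓ : 0 ≤ α * ℓ := mul_nonneg hα hℓ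
  calc ‖q - w‖ ≤ α * ℓ * ‖p - w‖ := hw.norm_sub_le_of_isProjOn hcv hα hlip hp.1 hq
    _ ≤ α * ℓ * (α * ℓ * ‖z - w‖) := by gcongr; exact hw.norm_sub_le_of_isProjOn hcv hα hlip hz hp
    _ ≤ α * ℓ * (α * ℓ * (α * L)) := by
        gcongr; exact (hw.norm_sub_le_mul_norm hcv hα hz).trans (by gcongr; exact hbound w hw.1)
    _ = L * ℓ ^ 2 * α ^ 3 := by ring

end ProximalPoint

theorem extragradient_one_step_almost_nonexpansive_general
    {H : Type*} [NormedAddCommGroup H] [InnerProductSpace ℝ H] [CompleteSpace H]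
    (S : Set H)
    (hScl : IsClosed S) (hScv : Convex ℝ S)
    (ℓ L α : ℝ) (hℓ : 0 < ℓ) (hα : 0 < α)
    (G : H → H)
    (hmono : ∀ u ∈ S, ∀ v ∈ S, 0 ≤ ⟪G u - G v, u - v⟫)
    (hlip : ∀ u ∈ S, ∀ v ∈ S, ‖G u - G v‖ ≤ ℓ * ‖u - v‖)
    (hbound : ∀ u ∈ S, ‖G u‖ ≤ L)
    (z z' p p' q q' : H) (hz : z ∈ S) (hz' : z' ∈ S)
    (hp : IsProjOn S (z - α • G z) p) (hq : IsProjOn S (z - α • G p) q)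
    (hp' : IsProjOn S (z' - α • G z') p') (hq' : IsProjOn S (z' - α • G p') q') :
    ‖q - q'‖ ≤ ‖z - z'‖ + 2 * L * ℓ ^ 2 * α ^ 3 := by
  obtain ⟨w, hw⟩ := exists_isProximalPointStep ⟨z, hz⟩ hScl hScv hℓ.le hα.le hmono hlip z
  obtain ⟨w', hw'⟩ := exists_isProximalPointStep ⟨z, hz⟩ hScl hScv hℓ.le hα.le hmono hlip z'
  have hqw := hw.norm_extragradient_sub_le hScv hℓ.le hα.le hlip hbound hz hp hq
  have hq'w' := hw'.norm_extragradient_sub_le hScv hℓ.le hα.le hlip hbound hz' hp' hq'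
  have hww' := hw.norm_sub_le_norm_sub hScv hα.le hmono hw'
  calc ‖q - q'‖ ≤ ‖q - w‖ + ‖w - q'‖ := norm_sub_le_norm_sub_add_norm_sub q w q'
    _ ≤ ‖q - w‖ + (‖w - w'‖ + ‖q' - w'‖) := by
        rw [norm_sub_rev q' w']; gcongr; exact norm_sub_le_norm_sub_add_norm_sub w w' q'
    _ ≤ ‖z - z'‖ + 2 * L * ℓ ^ 2 * α ^ 3 := by linarith

/-- Lemma B.7.  For a monotone, `ℓ`-Lipschitz operator `G` on a nonempty
bounded closed convex set `S` in a real Hilbert space with `‖G z‖ ≤ L` on `S`, and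
`0 < α ≤ 1/ℓ`, the one-step Extragradient map `EG(z) = Π_S(z − α G(Π_S(z − α G(z))))`
satisfies `‖EG(z) − EG(z')‖ ≤ ‖z − z'‖ + 2Lℓ²α³` for all `z, z' ∈ S`. -/
theorem extragradient_one_step_almost_nonexpansive
    {H : Type*} [NormedAddCommGroup H] [InnerProductSpace ℝ H] [CompleteSpace H]
    (S : Set H) (hSne : S.Nonempty) (hSbd : Bornology.IsBounded S)
    (hScl : IsClosed S) (hScv : Convex ℝ S)
    (ℓ L α : ℝ) (hℓ : 0 < ℓ) (hL : 0 ≤ L) (hα : 0 < α) (hαℓ : α ≤ 1 / ℓ)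
    (G : H → H)
    (hmono : ∀ u ∈ S, ∀ v ∈ S, 0 ≤ ⟪G u - G v, u - v⟫)
    (hlip : ∀ u ∈ S, ∀ v ∈ S, ‖G u - G v‖ ≤ ℓ * ‖u - v‖)
    (hbound : ∀ u ∈ S, ‖G u‖ ≤ L)
    (z z' p p' q q' : H) (hz : z ∈ S) (hz' : z' ∈ S)
    (hp : IsProjOn S (z - α • G z) p) (hq : IsProjOn S (z - α • G p) q)
    (hp' : IsProjOn S (z' - α • G z') p') (hq' : IsProjOn S (z' - α • G p') q') :
    ‖q - q'‖ ≤ ‖z - z'‖ + 2 * L * ℓ ^ 2 * α ^ 3 :=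
  extragradient_one_step_almost_nonexpansive_general S hScl hScv ℓ L α hℓ hα G hmono hlip hbound z
    z' p p' q q' hz hz' hp hq hp' hq'
end
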